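/- arXiv:2305.02254 — 2 statements merged into one kernel-verified Lean document; each statement's English description precedes it below -/
import Mathlib

section
/- Let X be a complete operator system (or unital C*-algebra) with state space S(X), and let L : X → [0,∞] be a seminorm. Define the extended metric d_L(μ,ν) = sup{ |μ(x) − ν(x)| : x ∈ X, L(x) ≤ 1 } on S(X). If d_L(μ,ν) < ∞ for all μ, ν ∈ S(X), then S(X) has finite diameter with respect to d_L, i.e. there is C > 0 with d_L(μ,ν) ≤ C for all μ, ν ∈ S(X). -/
/-!
The state space `S` is a convex, closed and norm-bounded subset of the Banach space `X →L[ℂ] ℂ`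
(bounded because every element of `X` is a combination of four positive elements of no larger
norm). By Baire's theorem one of the closed sets `{μ ∈ S | d_L(μ, μ₀) ≤ n}` contains a relative
ball of `S` around some `φ₀`. Convexity lets every state be pulled into that ball:
`φ₀ + t (μ - φ₀)` is a state, so the bound there gives `d_L(μ, φ₀) ≤ 2n / t` for all `μ ∈ S`.
-/

open scoped ENNReal ComplexOrder

/-- A state on a unital C*-algebra: a continuous linear functional which is unital and
positive (hence automatically of norm one). -/
def IsState {A : Type*} [CStarAlgebra A] (φ : A →L[ℂ] ℂ) : Prop :=
  φ 1 = 1 ∧ ∀ a : A, 0 ≤ φ (star a * a)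

lemma IsComplete.exists_ball_forall_le {X ι : Type*} [PseudoMetricSpace X] {K : Set X}
    (hK : IsComplete K) (hne : K.Nonempty) {f : ι → X → ℝ} (hf : ∀ i, Continuous (f i))
    (hbdd : ∀ x ∈ K, ∃ C, ∀ i, f i x ≤ C) :
    ∃ b ∈ K, ∃ ε > 0, ∃ C, ∀ x ∈ K, dist x b < ε → ∀ i, f i x ≤ C := by
  have : CompleteSpace K := hK.completeSpace_coe
  have : Nonempty K := hne.to_subtype
  let F : ℕ → Set K := fun n => {x | ∀ i, f i x ≤ n}
  have hF_closed (n : ℕ) : IsClosed (F n) := by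
    simp only [F, Set.ofPred_forall]
    exact isClosed_iInter fun i => isClosed_le ((hf i).comp continuous_subtype_val) continuous_const
  have hF_cover : ⋃ n, F n = Set.univ := Set.eq_univ_of_forall fun x => by
    obtain ⟨C, hC⟩ := hbdd x x.2
    exact Set.mem_iUnion.mpr ⟨⌈C⌉₊, fun i => (hC i).trans (Nat.le_ceil C)⟩
  obtain ⟨n, b, hb⟩ := nonempty_interior_of_iUnion_of_closed hF_closed hF_cover
  obtain ⟨ε, hε, hball⟩ := Metric.isOpen_iff.mp isOpen_interior b hb
  exact ⟨b, b.2, ε, hε, n, fun x hx hxb => interior_subset (hball (a := ⟨x, hx⟩) hxb)⟩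

lemma Convex.banach_steinhaus_sub {E F ι : Type*} [NormedAddCommGroup E] [NormedSpace ℝ E]
    [SeminormedAddCommGroup F] [NormedSpace ℝ F] {K : Set E} (hconv : Convex ℝ K)
    (hcomplete : IsComplete K) (hbdd : Bornology.IsBounded K) (g : ι → E →L[ℝ] F)
    (h : ∀ a ∈ K, ∀ b ∈ K, ∃ C, ∀ i, ‖g i (a - b)‖ ≤ C) :
    ∃ C, ∀ a ∈ K, ∀ b ∈ K, ∀ i, ‖g i (a - b)‖ ≤ C := by
  rcases K.eq_empty_or_nonempty with rfl | ⟨a₀, ha₀⟩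
  · exact ⟨0, by simp⟩
  obtain ⟨b, hb, ε, hε, C, hC⟩ := hcomplete.exists_ball_forall_le ⟨a₀, ha₀⟩
    (f := fun i a => ‖g i (a - a₀)‖) (fun i => by fun_prop) (fun a ha => h a ha a₀ ha₀)
  obtain ⟨R, hR, hKR⟩ := hbdd.subset_closedBall_lt 0 b
  set t := min 1 (ε / (2 * R))
  have ht : 0 < t := by positivity
  have hbound : ∀ a ∈ K, ∀ i, ‖g i (a - b)‖ ≤ 2 * C / t := by
    intro a ha i
    have hmem : b + t • (a - b) ∈ K := hconv.add_smul_sub_mem hb ha ⟨ht.le, min_le_left _ _⟩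
    have hdist : dist (b + t • (a - b)) b < ε := by
      have : ‖a - b‖ ≤ R := by simpa [dist_eq_norm] using hKR ha
      calc dist (b + t • (a - b)) b = t * ‖a - b‖ := by simp [dist_eq_norm, norm_smul, ht.le]
        _ ≤ ε / (2 * R) * R := by gcongr; exact min_le_right _ _
        _ < ε := by field_simp; linarith
    rw [le_div_iff₀ ht]
    calc ‖g i (a - b)‖ * t = ‖g i (t • (a - b))‖ := by
          rw [map_smul, norm_smul, Real.norm_of_nonneg ht.le, mul_comm]
      _ = ‖g i (b + t • (a - b) - a₀) - g i (b - a₀)‖ := by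
          rw [← map_sub]; congr 2; abel
      _ ≤ ‖g i (b + t • (a - b) - a₀)‖ + ‖g i (b - a₀)‖ := norm_sub_le _ _
      _ ≤ 2 * C := by linarith [hC _ hmem hdist i, hC b hb (by simpa using hε) i]
  refine ⟨2 * (2 * C / t), fun a ha a' ha' i => ?_⟩
  calc ‖g i (a - a')‖ = ‖g i (a - b) - g i (a' - b)‖ := by
        rw [← map_sub, sub_sub_sub_cancel_right]
    _ ≤ ‖g i (a - b)‖ + ‖g i (a' - b)‖ := norm_sub_le _ _
    _ ≤ 2 * (2 * C / t) := by linarith [hbound a ha i, hbound a' ha' i]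

section States

variable {A : Type*} [CStarAlgebra A]

lemma IsState.norm_apply_le {φ : A →L[ℂ] ℂ} (hφ : IsState φ) (a : A) : ‖φ a‖ ≤ 4 * ‖a‖ := by
  -- `CStarAlgebra` carries no order; the spectral one has `0 ≤ a ↔ ∃ b, a = star b * b`.
  let _ := CStarAlgebra.spectralOrder A
  have := CStarAlgebra.spectralOrderedRing A
  let f : A →ₚ[ℂ] ℂ := .mk₀ φ.toLinearMap fun x hx => by
    obtain ⟨b, rfl⟩ := CStarAlgebra.nonneg_iff_eq_star_mul_self.mp hx
    exact hφ.2 b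
  obtain ⟨y, hy_nonneg, hy_norm, hy⟩ := CStarAlgebra.exists_sum_four_nonneg a
  have hφy (i : Fin 4) : ‖φ (y i)‖ ≤ ‖a‖ := by
    have : ‖φ (y i)‖ ≤ ‖φ 1‖ * ‖y i‖ := f.norm_apply_le_of_nonneg _ (hy_nonneg i)
    rw [hφ.1, norm_one, one_mul] at this
    exact this.trans (hy_norm i)
  calc ‖φ a‖ = ‖∑ i : Fin 4, Complex.I ^ (i : ℕ) * φ (y i)‖ := by rw [hy]; simp
    _ ≤ ∑ _i : Fin 4, ‖a‖ := norm_sum_le_of_le _ fun i _ => by simpa using hφy i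
    _ = 4 * ‖a‖ := by simp

lemma isBounded_setOf_isState : Bornology.IsBounded {φ : A →L[ℂ] ℂ | IsState φ} :=
  isBounded_iff_forall_norm_le.mpr
    ⟨4, fun φ hφ => φ.opNorm_le_bound (by norm_num) (IsState.norm_apply_le hφ)⟩

lemma convex_setOf_isState : Convex ℝ {φ : A →L[ℂ] ℂ | IsState φ} := by
  intro φ hφ ψ hψ s t hs ht hst
  refine ⟨?_, fun a => ?_⟩
  · simp only [add_apply, FunLike.coe_smul, Pi.smul_apply, hφ.1, hψ.1, Complex.real_smul,
      mul_one]
    exact_mod_cast hst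
  · simp only [add_apply, FunLike.coe_smul, Pi.smul_apply]
    exact add_nonneg (smul_nonneg hs (hφ.2 a)) (smul_nonneg ht (hψ.2 a))

lemma isClosed_setOf_isState : IsClosed {φ : A →L[ℂ] ℂ | IsState φ} := by
  simp only [IsState, Set.ofPred_and, Set.ofPred_forall]
  exact (isClosed_eq (by fun_prop) continuous_const).inter
    (isClosed_iInter fun a => isClosed_le continuous_const (by fun_prop))

end States

theorem finite_implies_bounded_diameter_general
    {X : Type*} [CStarAlgebra X] (L : X → ℝ≥0∞)
    (hfin : ∀ μ ν : X →L[ℂ] ℂ, IsState μ → IsState ν →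
      ∃ C : ℝ, ∀ x : X, L x ≤ 1 → ‖μ x - ν x‖ ≤ C) :
    ∃ C : ℝ, 0 < C ∧ ∀ μ ν : X →L[ℂ] ℂ, IsState μ → IsState ν →
      ∀ x : X, L x ≤ 1 → ‖μ x - ν x‖ ≤ C := by
  let evaluation (x : {x : X // L x ≤ 1}) : (X →L[ℂ] ℂ) →L[ℝ] ℂ :=
    (ContinuousLinearMap.apply ℂ ℂ x.1).restrictScalars ℝ
  obtain ⟨C, hC⟩ := convex_setOf_isState.banach_steinhaus_sub
    isClosed_setOf_isState.isComplete isBounded_setOf_isState evaluation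
    fun μ hμ ν hν => (hfin μ ν hμ hν).imp fun _ hC x => hC x x.2
  exact ⟨max C 1, by positivity, fun μ ν hμ hν x hx =>
    (hC μ hμ ν hν ⟨x, hx⟩).trans (le_max_left _ _)⟩

/-- If the extended metric `d_L` associated with a seminorm `L : X → [0,∞]` is finite on
every pair of states, then the state space has finite diameter with respect to `d_L`. -/
theorem finite_implies_bounded_diameter
    {X : Type*} [CStarAlgebra X] (L : X → ℝ≥0∞)
    (hL_add : ∀ x y : X, L (x + y) ≤ L x + L y)
    (hL_smul : ∀ (c : ℂ) (x : X), L (c • x) = (‖c‖₊ : ℝ≥0∞) * L x)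
    (hfin : ∀ μ ν : X →L[ℂ] ℂ, IsState μ → IsState ν →
      ∃ C : ℝ, ∀ x : X, L x ≤ 1 → ‖μ x - ν x‖ ≤ C) :
    ∃ C : ℝ, 0 < C ∧ ∀ μ ν : X →L[ℂ] ℂ, IsState μ → IsState ν →
      ∀ x : X, L x ≤ 1 → ‖μ x - ν x‖ ≤ C :=
  finite_implies_bounded_diameter_general L hfin
end

section
/- With notation as above (fₙ = (1+εₙ²)^{-1/2}(eₙ + εₙe_{n+1}), qₙ the rank-one projection onto ℂfₙ, D the diagonal operator Deₖ = dₖeₖ), the commutator [D, qₙ] extends to a bounded operator on ℓ²(ℕ) with operator norm ‖[D,qₙ]‖ ≤ (εₙ/(1+εₙ²))(d_{n+1} − dₙ). -/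
noncomputable section
open scoped ENNReal ComplexOrder

local notation "ℓ²" => lp (fun _ : ℕ => ℂ) 2

/-- Build an element of `ℓ²(ℕ)` from a square-summable sequence. -/
def mkLp (f : ℕ → ℂ) (hf : Memℓp f 2) : ℓ² := ⟨f, hf⟩

@[simp] lemma mkLp_apply (f : ℕ → ℂ) (hf : Memℓp f 2) (n : ℕ) : (mkLp f hf) n = f n := rfl

/-- The standard orthonormal basis vectors of `ℓ²(ℕ)`. -/
def e (n : ℕ) : ℓ² := lp.single 2 n 1

/-- The maximal domain of the diagonal operator with eigenvalues `d n`. -/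
def domD (d : ℕ → ℝ) : Submodule ℂ ℓ² where
  carrier := {x | Memℓp (fun n => (d n : ℂ) * x n) 2}
  zero_mem' := by
    show Memℓp (fun n => (d n : ℂ) * (0 : ℓ²) n) 2
    convert zero_memℓp (E := fun _ : ℕ => ℂ) (p := 2) using 1 <;> exact funext fun n => by simp
  add_mem' := by
    intro x y hx hy
    have h := hx.add hy
    have : (fun n => (d n : ℂ) * (x + y) n) = fun n => (d n : ℂ) * x n + (d n : ℂ) * y n := by
      funext n; simp [mul_add]
    show Memℓp _ 2
    rw [this]; exact h
  smul_mem' := by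
    intro c x hx
    have h := hx.const_smul c
    have : (fun n => (d n : ℂ) * (c • x) n) = fun n => c • ((d n : ℂ) * x n) := by
      funext n; simp [smul_eq_mul]; ring
    show Memℓp _ 2
    rw [this]; exact h

/-- The self-adjoint diagonal operator `D eₙ = dₙ eₙ` on its maximal domain. -/
def Dop (d : ℕ → ℝ) : ℓ² →ₗ.[ℂ] ℓ² where
  domain := domD d
  toFun :=
    { toFun := fun x => mkLp (fun n => (d n : ℂ) * (x : ℓ²) n) x.2
      map_add' := by
        intro x y
        apply lp.ext
        funext n
        simp [mkLp, mul_add]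
        rfl
      map_smul' := by
        intro c x
        apply lp.ext
        funext n
        simp [mkLp, smul_eq_mul]
        ring }

local notation "⟪" x ", " y "⟫" => @inner ℂ _ _ x y

/-- The unit vectors `fₙ = (1+εₙ²)^{-1/2}(eₙ + εₙ e_{n+1})`. -/
def f (ε : ℕ → ℝ) (n : ℕ) : ℓ² :=
  (((1 + ε n ^ 2 : ℝ) ^ (-(1 / 2 : ℝ)) : ℝ) : ℂ) • (e n + ((ε n : ℝ) : ℂ) • e (n + 1))

/-- The rank-one orthogonal projection `qₙ` onto `ℂ fₙ`. -/
def q (ε : ℕ → ℝ) (n : ℕ) : lp (fun _ : ℕ => ℂ) 2 →L[ℂ] lp (fun _ : ℕ => ℂ) 2 :=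
  (innerSL ℂ (f ε n)).smulRight (f ε n)

/- The rank-one projection `qₙ` only sees the coordinates `n` and `n + 1`, and on their span
`D` is `diag(dₙ, dₙ₊₁)`. There the commutator of `D` with the projection onto
`ℂ (1, εₙ)` is `εₙ/(1+εₙ²) (dₙ₊₁ - dₙ)` times the rotation `eₙ ↦ eₙ₊₁, eₙ₊₁ ↦ -eₙ`, an
operator of norm at most one by Bessel's inequality. -/

theorem Orthonormal.norm_smulRight_sub_smulRight_le {𝕜 E ι : Type*} [RCLike 𝕜]
    [NormedAddCommGroup E] [InnerProductSpace 𝕜 E] {v : ι → E} (hv : Orthonormal 𝕜 v)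
    {i j : ι} (hij : i ≠ j) :
    ‖(innerSL 𝕜 (v i)).smulRight (v j) - (innerSL 𝕜 (v j)).smulRight (v i)‖ ≤ 1 := by
  refine ContinuousLinearMap.opNorm_le_bound _ zero_le_one fun ξ => ?_
  have h_orth : inner 𝕜 (inner 𝕜 (v i) ξ • v j) (inner 𝕜 (v j) ξ • v i) = 0 := by
    rw [inner_smul_left, inner_smul_right, hv.2 hij.symm, mul_zero, mul_zero]
  have h_pythagoras : ‖inner 𝕜 (v i) ξ • v j - inner 𝕜 (v j) ξ • v i‖ ^ 2
      = ‖inner 𝕜 (v i) ξ‖ ^ 2 + ‖inner 𝕜 (v j) ξ‖ ^ 2 := by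
    rw [@norm_sub_sq 𝕜, h_orth]
    simp [norm_smul, hv.1]
  have h_bessel : ‖inner 𝕜 (v i) ξ‖ ^ 2 + ‖inner 𝕜 (v j) ξ‖ ^ 2 ≤ ‖ξ‖ ^ 2 := by
    classical
    simpa [Finset.sum_pair hij] using hv.sum_inner_products_le (s := {i, j}) ξ
  rw [one_mul, ← pow_le_pow_iff_left₀ (norm_nonneg _) (norm_nonneg _) two_ne_zero]
  simpa [h_pythagoras] using h_bessel

lemma e_apply (i k : ℕ) : e i k = if k = i then 1 else 0 := by
  simp [e, lp.single_apply, Pi.single_apply]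

lemma orthonormal_e : Orthonormal ℂ e := by
  rw [orthonormal_iff_ite]
  intro i j
  rw [e, lp.inner_single_left]
  simp [e_apply]

lemma inner_e (i : ℕ) (ξ : ℓ²) : ⟪e i, ξ⟫ = ξ i := by
  simp [e, lp.inner_single_left]

/-- The rotation `eₙ ↦ eₙ₊₁`, `eₙ₊₁ ↦ -eₙ` of the plane spanned by `eₙ` and `eₙ₊₁`, which
vanishes on its orthogonal complement. -/
def rotE (n : ℕ) : ℓ² →L[ℂ] ℓ² :=
  (innerSL ℂ (e n)).smulRight (e (n + 1)) - (innerSL ℂ (e (n + 1))).smulRight (e n)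

lemma norm_rotE_le (n : ℕ) : ‖rotE n‖ ≤ 1 :=
  orthonormal_e.norm_smulRight_sub_smulRight_le (Nat.succ_ne_self n).symm

lemma rotE_apply (n : ℕ) (ξ : ℓ²) (k : ℕ) :
    rotE n ξ k = ξ n * (if k = n + 1 then 1 else 0) - ξ (n + 1) * (if k = n then 1 else 0) := by
  simp only [rotE, sub_apply, ContinuousLinearMap.smulRight_apply,
    innerSL_apply_apply, inner_e, lp.coeFn_sub, lp.coeFn_smul, Pi.sub_apply, Pi.smul_apply,
    e_apply, smul_eq_mul]

lemma q_apply (ε : ℕ → ℝ) (n : ℕ) (ξ : ℓ²) (k : ℕ) :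
    q ε n ξ k = (1 + (ε n : ℂ) ^ 2)⁻¹ * (ξ n + ε n * ξ (n + 1)) *
      ((if k = n then 1 else 0) + ε n * (if k = n + 1 then 1 else 0)) := by
  have h_pos : (0 : ℝ) < 1 + ε n ^ 2 := by positivity
  have h_sq : ((1 + ε n ^ 2) ^ (-(1 / 2 : ℝ)) : ℝ) * (1 + ε n ^ 2) ^ (-(1 / 2 : ℝ))
      = (1 + ε n ^ 2)⁻¹ := by
    rw [← Real.rpow_add h_pos]
    norm_num [Real.rpow_neg_one]
  have h_sqC := congrArg (fun x : ℝ => (x : ℂ)) h_sq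
  push_cast at h_sqC
  simp only [q, f, ContinuousLinearMap.smulRight_apply, innerSL_apply_apply, inner_smul_left,
    inner_add_left, inner_e, lp.coeFn_smul, lp.coeFn_add, Pi.smul_apply, Pi.add_apply,
    e_apply, smul_eq_mul, Complex.conj_ofReal]
  linear_combination (ξ n + ε n * ξ (n + 1)) *
    ((if k = n then 1 else 0) + ε n * (if k = n + 1 then 1 else 0)) * h_sqC

lemma Dop_apply (d : ℕ → ℝ) {ξ : ℓ²} (hξ : ξ ∈ domD d) (k : ℕ) :
    Dop d ⟨ξ, hξ⟩ k = d k * ξ k :=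
  rfl

lemma Dop_q_sub_q_Dop (d ε : ℕ → ℝ) (n : ℕ) {ξ : ℓ²} (hξ : ξ ∈ domD d)
    (hq : q ε n ξ ∈ domD d) :
    Dop d ⟨q ε n ξ, hq⟩ - q ε n (Dop d ⟨ξ, hξ⟩)
      = ((ε n / (1 + ε n ^ 2) * (d (n + 1) - d n) : ℝ) : ℂ) • rotE n ξ := by
  ext k
  simp only [lp.coeFn_sub, lp.coeFn_smul, Pi.sub_apply, Pi.smul_apply, smul_eq_mul,
    Dop_apply, q_apply, rotE_apply]
  push_cast
  rcases eq_or_ne k n with rfl | hkn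
  · simp only [if_neg (Nat.succ_ne_self k).symm]
    ring
  rcases eq_or_ne k (n + 1) with rfl | hkn1
  · simp only [if_neg (Nat.succ_ne_self n)]
    ring
  simp only [if_neg hkn, if_neg hkn1]
  ring

/-- The commutator `[D, qₙ]`, defined on the span of the basis vectors, extends to a
bounded operator on `ℓ²(ℕ)` of norm at most `(εₙ/(1+εₙ²))(d_{n+1} − dₙ)`. -/
theorem commutator_bounded_extension
    (d : ℕ → ℝ) (hd_mono : StrictMono d) (ε : ℕ → ℝ) (hε : ∀ n, 0 < ε n) (n : ℕ) :
    ∃ T : lp (fun _ : ℕ => ℂ) 2 →L[ℂ] lp (fun _ : ℕ => ℂ) 2,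
      ‖T‖ ≤ ε n / (1 + ε n ^ 2) * (d (n + 1) - d n) ∧
      ∀ ξ ∈ Submodule.span ℂ (Set.range e), ∀ (hξ : ξ ∈ domD d) (hq : q ε n ξ ∈ domD d),
        T ξ = Dop d ⟨q ε n ξ, hq⟩ - q ε n (Dop d ⟨ξ, hξ⟩) := by
  set a : ℝ := ε n / (1 + ε n ^ 2) * (d (n + 1) - d n)
  have ha : 0 ≤ a :=
    mul_nonneg (div_nonneg (hε n).le (by positivity)) (sub_nonneg.2 (hd_mono n.lt_succ_self).le)
  refine ⟨(a : ℂ) • rotE n, ?_, fun ξ _ hξ hq => (Dop_q_sub_q_Dop d ε n hξ hq).symm⟩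
  calc ‖(a : ℂ) • rotE n‖ ≤ ‖(a : ℂ)‖ * ‖rotE n‖ := ContinuousLinearMap.opNorm_smul_le _ _
    _ ≤ a * 1 := by
      rw [Complex.norm_of_nonneg ha]
      exact mul_le_mul_of_nonneg_left (norm_rotE_le n) ha
    _ = a := mul_one a
end
end
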